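/- Let E be a pseudo effect algebra satisfying (RDP) with S(E) ≠ ∅, and let m be a nonzero Jordan signed measure on E. Then m has a unique canonical Jordan decomposition: there exist real numbers α₁, α₂ ≥ 0 and states s₁, s₂ on E such that m = α₁ s₁ − α₂ s₂, α₁ s₁ = m⁺ and α₂ s₂ = m⁻, where m⁺ = m ⋁ 0 and m⁻ = −(m ⋀ 0) in the lattice J(E); in particular m = m⁺ − m⁻, and for every decomposition m = m₁ − m₂ with m₁, m₂ measures one has m⁺ ≤⁺ m₁ and m⁻ ≤⁺ m₂. -/

import Mathlib

/-!
Since `m⁺ = m ⋁ 0` and `-m⁻ = m ⋀ 0` dominate, resp. are dominated by, `0`, both `m⁺` and `m⁻`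
are measures, and the po-group identity `m ⋁ 0 = m - m ⋀ 0` (upper bounds of `{m, 0}` are
exactly `m -` lower bounds of `{m, 0}`) gives `m = m⁺ - m⁻`. A measure `μ` is `μ(1)` times a state,
and the coefficient is recovered as the value at `1`, whence uniqueness. Minimality is the
least-upper-bound property of `m⁺` applied to the upper bound `m₁` of `{m, 0}`.
-/

/-- A pseudo effect algebra: a partial algebra `(E; +, 0, 1)` where the partial
addition is encoded as `padd : E → E → Option E` (`padd a b = some c` means
`a + b` is defined and equals `c`). -/
class PseudoEffectAlgebra (E : Type) where
  padd : E → E → Option E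
  pzero : E
  pone : E
  /-- (i) `a+b` and `(a+b)+c` exist iff `b+c` and `a+(b+c)` exist ... -/
  assoc_defined : ∀ a b c : E,
    (∃ x, padd a b = some x ∧ (padd x c).isSome) ↔
      (∃ y, padd b c = some y ∧ (padd a y).isSome)
  /-- ... and in this case `(a+b)+c = a+(b+c)`. -/
  assoc_eq : ∀ a b c x y : E, padd a b = some x → padd b c = some y →
    padd x c = padd a y
  /-- (ii) there is exactly one `d` with `a + d = 1`. -/
  exists_unique_right : ∀ a : E, ∃! d, padd a d = some pone
  /-- (ii) there is exactly one `e` with `e + a = 1`. -/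
  exists_unique_left : ∀ a : E, ∃! e, padd e a = some pone
  /-- (iii) if `a+b` exists, there are `d, e` with `a+b = d+a = b+e`. -/
  shift : ∀ a b c : E, padd a b = some c →
    ∃ d e, padd d a = some c ∧ padd b e = some c
  /-- (iv) if `1+a` exists then `a = 0`. -/
  one_add : ∀ a : E, (padd pone a).isSome → a = pzero
  /-- (iv) if `a+1` exists then `a = 0`. -/
  add_one : ∀ a : E, (padd a pone).isSome → a = pzero

namespace PseudoEffectAlgebra

variable {E : Type} [PseudoEffectAlgebra E]

/-- The induced partial order: `a ≤ b` iff `b = a + c` for some `c ∈ E`. -/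
def pLe (a b : E) : Prop := ∃ c, padd a c = some b

/-- The Riesz Decomposition Property (RDP). -/
def RDP (E : Type) [PseudoEffectAlgebra E] : Prop :=
  ∀ a₁ a₂ b₁ b₂ c : E, padd a₁ a₂ = some c → padd b₁ b₂ = some c →
    ∃ d₁ d₂ d₃ d₄ : E, padd d₁ d₂ = some a₁ ∧ padd d₃ d₄ = some a₂ ∧
      padd d₁ d₃ = some b₁ ∧ padd d₂ d₄ = some b₂

/-- A signed measure on `E`. -/
def IsSignedMeasure (m : E → ℝ) : Prop :=
  ∀ a b c : E, padd a b = some c → m c = m a + m b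

/-- A (positive) measure on `E`. -/
def IsMeasure (m : E → ℝ) : Prop :=
  IsSignedMeasure m ∧ ∀ a : E, 0 ≤ m a

/-- A state on `E`. -/
def IsState (s : E → ℝ) : Prop := IsMeasure s ∧ s pone = 1

/-- A Jordan signed measure: a difference of two measures. -/
def IsJordan (m : E → ℝ) : Prop :=
  ∃ m₁ m₂ : E → ℝ, IsMeasure m₁ ∧ IsMeasure m₂ ∧ m = m₁ - m₂

/-- `m ≤⁺ m'` iff `m' - m` is a (positive) measure. -/
def MLe (m m' : E → ℝ) : Prop := IsMeasure (m' - m)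

/-- The (partial) sum `x₁ + ⋯ + xₙ` of a nonempty list of elements of `E`. -/
def lsum : List E → Option E
  | [] => some pzero
  | [a] => some a
  | a :: b :: l => (lsum (b :: l)).bind (fun s => padd a s)

/-- `m` is the supremum, in the po-group `J(E)` of Jordan signed measures ordered
by `≤⁺`, of the set `S`. -/
def IsSupIn (S : Set (E → ℝ)) (m : E → ℝ) : Prop :=
  IsJordan m ∧ (∀ t ∈ S, MLe t m) ∧
    ∀ h : E → ℝ, IsJordan h → (∀ t ∈ S, MLe t h) → MLe m h

/-- `m` is the infimum, in the po-group `J(E)` of Jordan signed measures ordered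
by `≤⁺`, of the set `S`. -/
def IsInfIn (S : Set (E → ℝ)) (m : E → ℝ) : Prop :=
  IsJordan m ∧ (∀ t ∈ S, MLe m t) ∧
    ∀ h : E → ℝ, IsJordan h → (∀ t ∈ S, MLe h t) → MLe h m

variable (E) in
/-- The state space `S(E)`. -/
def stateSet : Set (E → ℝ) := {s | IsState s}

variable (E) in
/-- A face of the convex set `S(E)`. -/
def IsFace (F : Set (E → ℝ)) : Prop :=
  F ⊆ stateSet E ∧
  (∀ s₁ ∈ F, ∀ s₂ ∈ F, ∀ lam : ℝ, 0 ≤ lam → lam ≤ 1 →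
    lam • s₁ + (1 - lam) • s₂ ∈ F) ∧
  (∀ s₁ ∈ stateSet E, ∀ s₂ ∈ stateSet E, ∀ lam : ℝ, 0 < lam → lam < 1 →
    lam • s₁ + (1 - lam) • s₂ ∈ F → s₁ ∈ F ∧ s₂ ∈ F)

variable (E) in
/-- The face of `S(E)` generated by a set `X` (the smallest face containing `X`). -/
def faceGen (X : Set (E → ℝ)) : Set (E → ℝ) :=
  ⋂₀ {F : Set (E → ℝ) | IsFace E F ∧ X ⊆ F}

theorem isMeasure_zero : IsMeasure (0 : E → ℝ) :=
  ⟨fun _ _ _ _ => by simp, fun _ => le_rfl⟩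

theorem IsMeasure.add {μ ν : E → ℝ} (hμ : IsMeasure μ) (hν : IsMeasure ν) :
    IsMeasure (μ + ν) :=
  ⟨fun a b c h => by simp only [Pi.add_apply, hμ.1 a b c h, hν.1 a b c h]; ring,
    fun a => add_nonneg (hμ.2 a) (hν.2 a)⟩

theorem IsMeasure.isJordan {μ : E → ℝ} (hμ : IsMeasure μ) : IsJordan μ :=
  ⟨μ, 0, hμ, isMeasure_zero, (sub_zero μ).symm⟩

theorem IsJordan.sub {m m' : E → ℝ} (hm : IsJordan m) (hm' : IsJordan m') :
    IsJordan (m - m') := by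
  obtain ⟨μ₁, μ₂, hμ₁, hμ₂, rfl⟩ := hm
  obtain ⟨ν₁, ν₂, hν₁, hν₂, rfl⟩ := hm'
  exact ⟨μ₁ + ν₂, μ₂ + ν₁, hμ₁.add hν₂, hμ₂.add hν₁, by abel⟩

theorem IsMeasure.mLe {μ m m' : E → ℝ} (hμ : IsMeasure μ) (h : μ = m' - m) : MLe m m' := by
  rw [MLe, ← h]
  exact hμ

theorem MLe.of_sub_eq {m₁ m₁' m₂ m₂' : E → ℝ} (h : MLe m₁ m₁') (e : m₁' - m₁ = m₂' - m₂) :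
    MLe m₂ m₂' := by
  rw [MLe, ← e]
  exact h

theorem MLe.antisymm {m m' : E → ℝ} (h : MLe m m') (h' : MLe m' m) : m = m' := by
  funext a
  have := h.2 a
  have := h'.2 a
  simp only [Pi.sub_apply] at *
  linarith

theorem IsMeasure.apply_le_apply_one {μ : E → ℝ} (hμ : IsMeasure μ) (a : E) :
    μ a ≤ μ pone := by
  obtain ⟨d, hd, -⟩ := exists_unique_right a
  linarith [hμ.1 a d pone hd, hμ.2 d]

/-- If `μ 1 = 0` then `μ = 0`, and any state serves; otherwise normalise by `μ 1`. -/
theorem IsMeasure.exists_smul_state (hne : (stateSet E).Nonempty) {μ : E → ℝ}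
    (hμ : IsMeasure μ) : ∃ α : ℝ, ∃ s : E → ℝ, 0 ≤ α ∧ IsState s ∧ α • s = μ := by
  rcases (hμ.2 pone).eq_or_lt with h0 | hpos
  · obtain ⟨s, hs⟩ := hne
    refine ⟨0, s, le_rfl, hs, funext fun a => ?_⟩
    simp only [zero_smul, Pi.zero_apply]
    linarith [hμ.apply_le_apply_one a, hμ.2 a]
  · refine ⟨μ pone, (μ pone)⁻¹ • μ, hpos.le, ⟨⟨fun a b c h => ?_, fun a => ?_⟩, ?_⟩, ?_⟩
    · simp only [Pi.smul_apply, smul_eq_mul, hμ.1 a b c h]; ring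
    · exact smul_nonneg (inv_nonneg.2 hpos.le) (hμ.2 a)
    · simp [hpos.ne']
    · rw [smul_smul, mul_inv_cancel₀ hpos.ne', one_smul]

theorem IsState.eq_of_smul_eq_smul {s t : E → ℝ} (hs : IsState s) (ht : IsState t)
    {α β : ℝ} (h : α • s = β • t) : α = β := by
  simpa [hs.2, ht.2] using congrFun h pone

theorem IsSupIn.eq_sub_of_isInfIn {m mp mi : E → ℝ} (hm : IsJordan m)
    (hp : IsSupIn {m, 0} mp) (hi : IsInfIn {m, 0} mi) : mp = m - mi := by
  have hmp : MLe m mp := hp.2.1 m (by simp)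
  have hmp0 : MLe 0 mp := hp.2.1 0 (by simp)
  have hmi : MLe mi m := hi.2.1 m (by simp)
  have hmi0 : MLe mi 0 := hi.2.1 0 (by simp)
  apply MLe.antisymm
  · refine hp.2.2 (m - mi) (hm.sub hi.1) ?_
    rintro t (rfl | rfl)
    · exact hmi0.of_sub_eq (by abel)
    · exact hmi.of_sub_eq (by abel)
  · have hlower : MLe (m - mp) mi := by
      refine hi.2.2 (m - mp) (hm.sub hp.1) ?_
      rintro t (rfl | rfl)
      · exact hmp0.of_sub_eq (by abel)
      · exact hmp.of_sub_eq (by abel)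
    exact hlower.of_sub_eq (by abel)

theorem IsSupIn.mLe_of_eq_sub {m mp μ₁ μ₂ : E → ℝ} (hp : IsSupIn {m, 0} mp)
    (hμ₁ : IsMeasure μ₁) (hμ₂ : IsMeasure μ₂) (h : m = μ₁ - μ₂) : MLe mp μ₁ := by
  refine hp.2.2 μ₁ hμ₁.isJordan ?_
  rintro t (rfl | rfl)
  · exact hμ₂.mLe (by rw [h]; abel)
  · exact hμ₁.mLe (by abel)

theorem stmt19_general (hne : (stateSet E).Nonempty)
    (m : E → ℝ) (hm : IsJordan m)
    (mp mi : E → ℝ)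
    (hp : IsSupIn {m, 0} mp)    -- `mp = m⁺ = m ⋁ 0`
    (hi : IsInfIn {m, 0} mi) :  -- `-mi = m⁻ = -(m ⋀ 0)`
    -- existence of the canonical Jordan decomposition:
    (∃ α₁ α₂ : ℝ, ∃ s₁ s₂ : E → ℝ, 0 ≤ α₁ ∧ 0 ≤ α₂ ∧ IsState s₁ ∧ IsState s₂ ∧
      m = α₁ • s₁ - α₂ • s₂ ∧ α₁ • s₁ = mp ∧ α₂ • s₂ = -mi) ∧
    -- its uniqueness (the two summands are determined, being `m⁺` and `m⁻`):
    (∀ α₁ α₂ β₁ β₂ : ℝ, ∀ s₁ s₂ t₁ t₂ : E → ℝ,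
      0 ≤ α₁ → 0 ≤ α₂ → 0 ≤ β₁ → 0 ≤ β₂ →
      IsState s₁ → IsState s₂ → IsState t₁ → IsState t₂ →
      α₁ • s₁ = mp → α₂ • s₂ = -mi → β₁ • t₁ = mp → β₂ • t₂ = -mi →
      α₁ = β₁ ∧ α₂ = β₂ ∧ α₁ • s₁ = β₁ • t₁ ∧ α₂ • s₂ = β₂ • t₂) ∧
    -- `m = m⁺ - m⁻`:
    m = mp - (-mi) ∧
    -- minimality of the Jordan decomposition:
    (∀ m₁ m₂ : E → ℝ, IsMeasure m₁ → IsMeasure m₂ → m = m₁ - m₂ →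
      MLe mp m₁ ∧ MLe (-mi) m₂) := by
  have hmp : IsMeasure mp := sub_zero mp ▸ hp.2.1 0 (by simp)
  have hmi : IsMeasure (-mi) := zero_sub mi ▸ hi.2.1 0 (by simp)
  have hdecomp : m = mp - (-mi) := by rw [hp.eq_sub_of_isInfIn hm hi]; abel
  obtain ⟨α₁, s₁, hα₁, hs₁, hsm₁⟩ := hmp.exists_smul_state hne
  obtain ⟨α₂, s₂, hα₂, hs₂, hsm₂⟩ := hmi.exists_smul_state hne
  refine ⟨⟨α₁, α₂, s₁, s₂, hα₁, hα₂, hs₁, hs₂, hsm₁ ▸ hsm₂ ▸ hdecomp, hsm₁, hsm₂⟩, ?_, hdecomp, ?_⟩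
  · intro a₁ a₂ b₁ b₂ t₁ t₂ u₁ u₂ _ _ _ _ ht₁ ht₂ hu₁ hu₂ e₁ e₂ e₃ e₄
    have h₁ : a₁ • t₁ = b₁ • u₁ := e₁.trans e₃.symm
    have h₂ : a₂ • t₂ = b₂ • u₂ := e₂.trans e₄.symm
    exact ⟨ht₁.eq_of_smul_eq_smul hu₁ h₁, ht₂.eq_of_smul_eq_smul hu₂ h₂, h₁, h₂⟩
  · intro μ₁ μ₂ hμ₁ hμ₂ hsub
    have hle := hp.mLe_of_eq_sub hμ₁ hμ₂ hsub
    refine ⟨hle, hle.of_sub_eq ?_⟩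
    linear_combination hsub.symm.trans hdecomp

/-- formula (4.2) and the Jordan decomposition: every nonzero
Jordan signed measure `m` on a pseudo effect algebra with (RDP) and `S(E) ≠ ∅` has a
unique canonical Jordan decomposition `m = α₁ s₁ - α₂ s₂` with `α₁, α₂ ≥ 0`,
`s₁, s₂` states, `α₁ s₁ = m⁺` and `α₂ s₂ = m⁻`; in particular `m = m⁺ - m⁻`, and for
every decomposition `m = m₁ - m₂` into measures, `m⁺ ≤⁺ m₁` and `m⁻ ≤⁺ m₂`. -/
theorem stmt19 (hRDP : RDP E) (hne : (stateSet E).Nonempty)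
    (m : E → ℝ) (hm : IsJordan m) (hm0 : m ≠ 0)
    (mp mi : E → ℝ)
    (hp : IsSupIn {m, 0} mp)    -- `mp = m⁺ = m ⋁ 0`
    (hi : IsInfIn {m, 0} mi) :  -- `-mi = m⁻ = -(m ⋀ 0)`
    -- existence of the canonical Jordan decomposition:
    (∃ α₁ α₂ : ℝ, ∃ s₁ s₂ : E → ℝ, 0 ≤ α₁ ∧ 0 ≤ α₂ ∧ IsState s₁ ∧ IsState s₂ ∧
      m = α₁ • s₁ - α₂ • s₂ ∧ α₁ • s₁ = mp ∧ α₂ • s₂ = -mi) ∧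
    -- its uniqueness (the two summands are determined, being `m⁺` and `m⁻`):
    (∀ α₁ α₂ β₁ β₂ : ℝ, ∀ s₁ s₂ t₁ t₂ : E → ℝ,
      0 ≤ α₁ → 0 ≤ α₂ → 0 ≤ β₁ → 0 ≤ β₂ →
      IsState s₁ → IsState s₂ → IsState t₁ → IsState t₂ →
      α₁ • s₁ = mp → α₂ • s₂ = -mi → β₁ • t₁ = mp → β₂ • t₂ = -mi →
      α₁ = β₁ ∧ α₂ = β₂ ∧ α₁ • s₁ = β₁ • t₁ ∧ α₂ • s₂ = β₂ • t₂) ∧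
    -- `m = m⁺ - m⁻`:
    m = mp - (-mi) ∧
    -- minimality of the Jordan decomposition:
    (∀ m₁ m₂ : E → ℝ, IsMeasure m₁ → IsMeasure m₂ → m = m₁ - m₂ →
      MLe mp m₁ ∧ MLe (-mi) m₂) :=
  stmt19_general hne m hm mp mi hp hi

end PseudoEffectAlgebra
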